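/- arXiv:1603.06228 — 6 statements merged into one kernel-verified Lean document; each statement's English description precedes it below -/
import Mathlib

section
/- If K is a field with more than 2 elements, V a finite-dimensional K-vector space, and f : V → V a nilpotent endomorphism, then every characteristic subspace of V (invariant under all automorphisms commuting with f) is hyperinvariant (invariant under all endomorphisms commuting with f). -/
open LinearMap

variable {K : Type*} [Field K] {V : Type*} [AddCommGroup V] [Module K V]

/-- `X` is hyperinvariant for `f`: invariant under every endomorphism commuting with `f`. -/
def Hinv (f : V →ₗ[K] V) (X : Submodule K V) : Prop :=
  ∀ g : V →ₗ[K] V, g ∘ₗ f = f ∘ₗ g → X.map g ≤ X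

/-- `X` is characteristic for `f`: `f`-invariant and fixed by every automorphism commuting with `f`. -/
def Chinv (f : V →ₗ[K] V) (X : Submodule K V) : Prop :=
  X.map f ≤ X ∧
    ∀ α : V ≃ₗ[K] V, (α : V →ₗ[K] V) ∘ₗ f = f ∘ₗ (α : V →ₗ[K] V) →
      X.map (α : V →ₗ[K] V) = X

/-- The cyclic subspace generated by `x`. -/
def cyc (f : V →ₗ[K] V) (x : V) : Submodule K V :=
  Submodule.span K (Set.range fun i : ℕ => (f ^ i) x)

/-- `x` has exponent `ℓ`. -/
def ExpEq (f : V →ₗ[K] V) (x : V) (ℓ : ℕ) : Prop :=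
  (f ^ ℓ) x = 0 ∧ ∀ j < ℓ, (f ^ j) x ≠ 0

/-- `x` has height `q`. -/
def HeightEq (f : V →ₗ[K] V) (x : V) (q : ℕ) : Prop :=
  x ∈ LinearMap.range (f ^ q) ∧ x ∉ LinearMap.range (f ^ (q + 1))

/-- The `r`-th Ulm invariant: number of Jordan blocks of size `r` (for `r ≥ 1`). -/
noncomputable def ulm (f : V →ₗ[K] V) (r : ℕ) : ℕ :=
  Module.finrank K ↥(LinearMap.ker f ⊓ LinearMap.range (f ^ (r - 1))) -
    Module.finrank K ↥(LinearMap.ker f ⊓ LinearMap.range (f ^ r))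

/-- `u` is a generator tuple with exponents `t`. -/
def IsGenTuple {k : ℕ} (f : V →ₗ[K] V) (u : Fin k → V) (t : Fin k → ℕ) : Prop :=
  (∀ i, ExpEq f (u i) (t i)) ∧ DirectSum.IsInternal (fun i => cyc f (u i))

/-- The summand `⟨U_a⟩` of all cyclic subspaces whose generator has exponent `a`. -/
def subU {k : ℕ} (f : V →ₗ[K] V) (u : Fin k → V) (t : Fin k → ℕ) (a : ℕ) : Submodule K V :=
  ⨆ i ∈ {i : Fin k | t i = a}, cyc f (u i)

/-! Over a field with more than two elements pick `d ∉ {0, 1}`. If `g` commutes with `f`, the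
Fitting decomposition `V = ker gⁿ ⊕ range gⁿ` is invariant under everything commuting with `g`,
and `g` is nilpotent on the first summand and invertible on the second. Hence
`(g - 1) ⊕ d • g` and `1 ⊕ (1 - d) • g` are automorphisms commuting with `f`, and their sum is
`g`. A characteristic subspace is mapped into itself by both, hence by `g`. -/

section Projection

variable {R M : Type*} [Ring R] [AddCommGroup M] [Module R M]

theorem ker_mem_invtSubmodule_of_commute {u h : Module.End R M} (hc : Commute u h) :
    ker u ∈ Module.End.invtSubmodule h := fun x (hx : u x = 0) =>
  show u (h x) = 0 by rw [← Module.End.mul_apply, hc.eq, Module.End.mul_apply, hx, map_zero]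

theorem range_mem_invtSubmodule_of_commute {u h : Module.End R M} (hc : Commute u h) :
    range u ∈ Module.End.invtSubmodule h := by
  rintro _ ⟨y, rfl⟩
  exact ⟨h y, by rw [← Module.End.mul_apply, hc.eq, Module.End.mul_apply]⟩

theorem commute_projection_of_mem_invtSubmodule {p q : Submodule R M} (hpq : IsCompl p q)
    {h : Module.End R M} (hp : p ∈ Module.End.invtSubmodule h)
    (hq : q ∈ Module.End.invtSubmodule h) : Commute h (p.projection q hpq) := by
  refine (LinearMap.IsIdempotentElem.commute_iff (Submodule.isIdempotentElem_projection hpq)).mpr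
    ?_ |>.symm
  rwa [Submodule.range_projection, Submodule.ker_projection, and_iff_left hq]

theorem injective_mul_projection_add_mul_projection {p q : Submodule R M} (hpq : IsCompl p q)
    {u v : Module.End R M} (hu : p ∈ Module.End.invtSubmodule u)
    (hv : q ∈ Module.End.invtSubmodule v) (hpu : Disjoint p (ker u))
    (hqv : Disjoint q (ker v)) :
    Function.Injective (u * p.projection q hpq + v * q.projection p hpq.symm) := by
  rw [← ker_eq_bot, eq_bot_iff]
  intro x (hx : u (p.projection q hpq x) + v (q.projection p hpq.symm x) = 0)
  have hpx := Submodule.projection_apply_mem hpq x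
  have hqx := Submodule.projection_apply_mem hpq.symm x
  obtain ⟨hux, hvx⟩ := Submodule.disjoint_iff_add_eq_zero.mp hpq.disjoint (hu hpx) (hv hqx) hx
  rw [Submodule.mem_bot, ← Submodule.projection_add_projection_eq_self hpq x,
    Submodule.disjoint_def.mp hpu _ hpx hux, Submodule.disjoint_def.mp hqv _ hqx hvx, add_zero]

end Projection

section Fitting

variable {R M : Type*} [Ring R] [AddCommGroup M] [Module R M] {g : Module.End R M} {n : ℕ}

theorem disjoint_ker_pow_ker_sub_one (g : Module.End R M) (n : ℕ) :
    Disjoint (ker (g ^ n)) (ker (g - 1)) := by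
  rw [Submodule.disjoint_def]
  intro x (hx : (g ^ n) x = 0) (hgx : (g - 1) x = 0)
  rw [LinearMap.sub_apply, sub_eq_zero, Module.End.one_apply] at hgx
  rwa [Module.End.pow_apply, Function.iterate_fixed hgx] at hx

theorem disjoint_range_pow_ker (hn : 1 ≤ n) (hpq : IsCompl (ker (g ^ n)) (range (g ^ n))) :
    Disjoint (range (g ^ n)) (ker g) :=
  hpq.disjoint.symm.mono_right (by simpa using g.iterateKer.monotone hn)

theorem commute_projection_ker_pow_range_pow {h : Module.End R M} (hh : Commute h g)
    (hpq : IsCompl (ker (g ^ n)) (range (g ^ n))) :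
    Commute h ((ker (g ^ n)).projection (range (g ^ n)) hpq) ∧
      Commute h ((range (g ^ n)).projection (ker (g ^ n)) hpq.symm) := by
  have hker := ker_mem_invtSubmodule_of_commute (hh.pow_right n).symm
  have hrange := range_mem_invtSubmodule_of_commute (hh.pow_right n).symm
  exact ⟨commute_projection_of_mem_invtSubmodule hpq hker hrange,
    commute_projection_of_mem_invtSubmodule hpq.symm hrange hker⟩

end Fitting

theorem injective_mul_projection_ker_pow_add_smul_mul_projection_range_pow
    {g u : Module.End K V} {n : ℕ} (hn : 1 ≤ n) (hpq : IsCompl (ker (g ^ n)) (range (g ^ n)))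
    (hug : Commute u g) (hu : Disjoint (ker (g ^ n)) (ker u)) {c : K} (hc : c ≠ 0) :
    Function.Injective (u * (ker (g ^ n)).projection (range (g ^ n)) hpq +
      (c • g) * (range (g ^ n)).projection (ker (g ^ n)) hpq.symm) := by
  refine injective_mul_projection_add_mul_projection hpq
    (ker_mem_invtSubmodule_of_commute ((hug.pow_right n).symm))
    (range_mem_invtSubmodule_of_commute (((Commute.refl g).smul_left c).pow_right n).symm) hu ?_
  rw [ker_smul _ _ hc]
  exact disjoint_range_pow_ker hn hpq

theorem exists_ne_zero_ne_one_of_two_lt_mk (hK : 2 < Cardinal.mk K) : ∃ d : K, d ≠ 0 ∧ d ≠ 1 :=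
  Cardinal.exists_ne_ne_of_three_le
    (two_add_one_eq_three (R := Cardinal) ▸ Cardinal.add_one_le_of_lt hK) 0 1

theorem exists_linearEquiv_add_eq_forall_commute [FiniteDimensional K V]
    (hK : 2 < Cardinal.mk K) (g : Module.End K V) :
    ∃ α β : V ≃ₗ[K] V, (α : Module.End K V) + β = g ∧
      ∀ h : Module.End K V, Commute h g → Commute h α ∧ Commute h β := by
  obtain ⟨d, hd0, hd1⟩ := exists_ne_zero_ne_one_of_two_lt_mk hK
  obtain ⟨n, hn, hpq⟩ : ∃ n, 1 ≤ n ∧ IsCompl (ker (g ^ n)) (range (g ^ n)) :=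
    ((Filter.eventually_ge_atTop 1).and g.eventually_isCompl_ker_pow_range_pow).exists
  set πp := (ker (g ^ n)).projection (range (g ^ n)) hpq
  set πq := (range (g ^ n)).projection (ker (g ^ n)) hpq.symm
  have hone : Disjoint (ker (g ^ n)) (ker (1 : Module.End K V)) := by
    rw [Module.End.one_eq_id, ker_id]
    exact disjoint_bot_right
  refine ⟨.ofInjectiveEndo ((g - 1) * πp + (d • g) * πq)
      (injective_mul_projection_ker_pow_add_smul_mul_projection_range_pow hn hpq
        ((Commute.refl g).sub_left (Commute.one_left g)) (disjoint_ker_pow_ker_sub_one g n) hd0),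
    .ofInjectiveEndo (1 * πp + ((1 - d) • g) * πq)
      (injective_mul_projection_ker_pow_add_smul_mul_projection_range_pow hn hpq
        (Commute.one_left g) hone (sub_ne_zero.mpr hd1.symm)),
    ?_, fun h hh => ?_⟩
  · have hπ : πp + πq = 1 := Submodule.projection_add_projection_eq_id hpq
    calc (g - 1) * πp + (d • g) * πq + (1 * πp + ((1 - d) • g) * πq)
        = g * (πp + πq) := by
          simp only [sub_mul, one_mul, smul_mul_assoc, sub_smul, one_smul, mul_add]; abel
      _ = g := by rw [hπ, mul_one]
  · obtain ⟨hhp, hhq⟩ := commute_projection_ker_pow_range_pow hh hpq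
    exact ⟨((hh.sub_right (Commute.one_right h)).mul_right hhp).add_right
        ((hh.smul_right d).mul_right hhq),
      ((Commute.one_right h).mul_right hhp).add_right ((hh.smul_right (1 - d)).mul_right hhq)⟩

theorem stmt0_general [FiniteDimensional K V] (f : V →ₗ[K] V)
    (hK : 2 < Cardinal.mk K) (X : Submodule K V) (hX : Chinv f X) : Hinv f X := by
  intro g hg
  obtain ⟨α, β, hαβ, hcomm⟩ := exists_linearEquiv_add_eq_forall_commute hK g
  obtain ⟨hfα, hfβ⟩ := hcomm f hg.symm
  rintro _ ⟨x, hx, rfl⟩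
  rw [← hαβ]
  exact X.add_mem (hX.2 α hfα.eq.symm ▸ Submodule.mem_map_of_mem hx)
    (hX.2 β hfβ.eq.symm ▸ Submodule.mem_map_of_mem hx)

theorem stmt0 [FiniteDimensional K V] (f : V →ₗ[K] V) (hf : IsNilpotent f)
    (hK : 2 < Cardinal.mk K) (X : Submodule K V) (hX : Chinv f X) : Hinv f X :=
  stmt0_general f hK X hX
end

section
/- Let K = GF(2), V = K^4, f the nilpotent endomorphism given on the standard basis by f(e1) = 0, f(e2) = e3, f(e3) = e4, f(e4) = 0, and z = e1 + e3. Then X = span{z, fz} is a characteristic subspace of V for f but is not hyperinvariant. -/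
open LinearMap

variable {K : Type*} [Field K] {V : Type*} [AddCommGroup V] [Module K V]

/-- The matrix of `f` : `f e₁ = 0`, `f e₂ = e₃`, `f e₃ = e₄`, `f e₄ = 0`. -/
def Mex : Matrix (Fin 4) (Fin 4) (ZMod 2) := !![0,0,0,0; 0,0,0,0; 0,1,0,0; 0,0,1,0]

noncomputable def fex : (Fin 4 → ZMod 2) →ₗ[ZMod 2] (Fin 4 → ZMod 2) := Matrix.toLin' Mex

/-- `z = e₁ + e₃`. -/
def zex : Fin 4 → ZMod 2 := ![1, 0, 1, 0]

/-
Inside `ker f² = span {e₁, e₃, e₄}`, the vectors lying neither in `range f = span {e₃, e₄}` nor in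
`ker f = span {e₁, e₄}` are `z` and `z + fz`. An automorphism commuting with `f` preserves these three
subspaces, so it sends `z` into `X = span {z, fz}`, and hence `X` into itself. The projection
`v ↦ v₁ e₁` commutes with `f` (both composites vanish), yet it sends `z` to `e₁ ∉ X`.
-/

open Submodule

section Commuting

variable {f g : V →ₗ[K] V}

theorem LinearMap.apply_mem_range_of_comp_comm (hg : g ∘ₗ f = f ∘ₗ g) {x : V}
    (hx : x ∈ range f) : g x ∈ range f := by
  obtain ⟨y, rfl⟩ := hx
  exact ⟨g y, (LinearMap.congr_fun hg y).symm⟩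

theorem LinearEquiv.symm_comp_comm {α : V ≃ₗ[K] V}
    (hα : (α : V →ₗ[K] V) ∘ₗ f = f ∘ₗ (α : V →ₗ[K] V)) :
    (α.symm : V →ₗ[K] V) ∘ₗ f = f ∘ₗ (α.symm : V →ₗ[K] V) := by
  ext v
  apply α.injective
  simpa using (LinearMap.congr_fun hα (α.symm v)).symm

theorem LinearEquiv.apply_mem_range_iff_of_comp_comm {α : V ≃ₗ[K] V}
    (hα : (α : V →ₗ[K] V) ∘ₗ f = f ∘ₗ (α : V →ₗ[K] V)) {x : V} :
    α x ∈ range f ↔ x ∈ range f := by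
  refine ⟨fun h => ?_, LinearMap.apply_mem_range_of_comp_comm hα⟩
  simpa using LinearMap.apply_mem_range_of_comp_comm (LinearEquiv.symm_comp_comm hα) h

theorem Submodule.map_span_pair_le_of_comp_comm {X : Submodule K V} (hg : g ∘ₗ f = f ∘ₗ g)
    (hX : X.map f ≤ X) {z : V} (hz : g z ∈ X) : (span K {z, f z}).map g ≤ X := by
  rw [Submodule.map_span_le]
  rintro v (rfl | rfl)
  · exact hz
  · have hgf : g (f z) = f (g z) := LinearMap.congr_fun hg z
    rw [hgf]
    exact hX ⟨g z, hz, rfl⟩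

theorem chinv_of_map_le {X : Submodule K V} (hX : X.map f ≤ X)
    (h : ∀ α : V ≃ₗ[K] V, (α : V →ₗ[K] V) ∘ₗ f = f ∘ₗ (α : V →ₗ[K] V) →
      X.map (α : V →ₗ[K] V) ≤ X) :
    Chinv f X := by
  refine ⟨hX, fun α hα => le_antisymm (h α hα) fun x hx => ?_⟩
  exact ⟨α.symm x, h α.symm (LinearEquiv.symm_comp_comm hα) ⟨x, hx, rfl⟩, α.apply_symm_apply x⟩

end Commuting

-- Coordinates are 0-indexed: `v i` is the coefficient of `e_(i+1)`.
theorem fex_apply (v : Fin 4 → ZMod 2) : fex v = ![0, 0, v 1, v 2] := by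
  ext i
  fin_cases i <;>
    simp [fex, Mex, Matrix.toLin'_apply, Matrix.mulVec, dotProduct, Fin.sum_univ_four]

theorem fex_fex_zex : fex (fex zex) = 0 := by
  ext i
  fin_cases i <;> simp [fex_apply, zex]

theorem mem_span_zex_iff (v : Fin 4 → ZMod 2) :
    v ∈ span (ZMod 2) {zex, fex zex} ↔ v 1 = 0 ∧ v 2 = v 0 := by
  rw [mem_span_pair]
  constructor
  · rintro ⟨a, b, rfl⟩
    simp [fex_apply, zex]
  · rintro ⟨h1, h2⟩
    refine ⟨v 0, v 3, ?_⟩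
    ext i
    fin_cases i <;> simp [fex_apply, zex, h1, h2]

theorem map_fex_span_zex_le :
    (span (ZMod 2) {zex, fex zex}).map fex ≤ span (ZMod 2) {zex, fex zex} := by
  rw [Submodule.map_span_le]
  rintro v (rfl | rfl)
  · exact subset_span (Set.mem_insert_of_mem _ rfl)
  · rw [fex_fex_zex]
    exact zero_mem _

theorem mem_span_zex_of_fex_fex_eq_zero {w : Fin 4 → ZMod 2} (h2 : fex (fex w) = 0)
    (hrange : w ∉ range fex) (hker : fex w ≠ 0) : w ∈ span (ZMod 2) {zex, fex zex} := by
  have hw1 : w 1 = 0 := by simpa [fex_apply] using congr_fun h2 3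
  have hw0 : w 0 ≠ 0 := fun hw0 =>
    hrange ⟨![0, w 2, w 3, 0], by ext i; fin_cases i <;> simp [fex_apply, hw0, hw1]⟩
  have hw2 : w 2 ≠ 0 := fun hw2 =>
    hker (by ext i; fin_cases i <;> simp [fex_apply, hw1, hw2])
  have nonzero_eq : ∀ a b : ZMod 2, a ≠ 0 → b ≠ 0 → b = a := by decide
  exact (mem_span_zex_iff w).2 ⟨hw1, nonzero_eq _ _ hw0 hw2⟩

theorem zex_notMem_range_fex : zex ∉ range fex := by
  rintro ⟨y, hy⟩
  simp [fex_apply, zex] at hy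

theorem fex_zex_ne_zero : fex zex ≠ 0 := by
  intro h
  simpa [fex_apply, zex] using congr_fun h 3

def projFirst : (Fin 4 → ZMod 2) →ₗ[ZMod 2] (Fin 4 → ZMod 2) :=
  LinearMap.single (ZMod 2) (fun _ => ZMod 2) 0 ∘ₗ LinearMap.proj 0

theorem projFirst_comp_fex : projFirst ∘ₗ fex = fex ∘ₗ projFirst := by
  ext i j
  fin_cases i <;> fin_cases j <;> simp [projFirst, fex_apply]

theorem projFirst_zex_notMem : projFirst zex ∉ span (ZMod 2) {zex, fex zex} := by
  rw [mem_span_zex_iff]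
  simp [projFirst, zex]

theorem stmt1 :
    Chinv fex (Submodule.span (ZMod 2) {zex, fex zex}) ∧
      ¬ Hinv fex (Submodule.span (ZMod 2) {zex, fex zex}) := by
  refine ⟨chinv_of_map_le map_fex_span_zex_le fun α hα => ?_, fun h => ?_⟩
  · have hcomm (v) : α (fex v) = fex (α v) := LinearMap.congr_fun hα v
    apply map_span_pair_le_of_comp_comm hα map_fex_span_zex_le
    rw [LinearEquiv.coe_coe]
    refine mem_span_zex_of_fex_fex_eq_zero ?_ ?_ ?_
    · rw [← hcomm, ← hcomm, fex_fex_zex, map_zero]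
    · rw [LinearEquiv.apply_mem_range_iff_of_comp_comm hα]
      exact zex_notMem_range_fex
    · rw [← hcomm]
      exact α.map_ne_zero_iff.2 fex_zex_ne_zero
  · exact projFirst_zex_notMem
      (h projFirst projFirst_comp_fex ⟨zex, subset_span (Set.mem_insert _ _), rfl⟩)
end

section
/- Let f be a nilpotent endomorphism of a finite-dimensional vector space V, and let U = (u_1, …, u_k) be a generator tuple, i.e., V is the direct sum of the cyclic subspaces ⟨u_i⟩ with exponents e(u_1) ≤ ⋯ ≤ e(u_k). Then the map sending an automorphism α commuting with f to the tuple (α(u_1), …, α(u_k)) is a bijection from Aut_f(V) onto the set of generator tuples of V with the same exponent sequence. -/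
/-!
Let `f` commute with `α`. The vectors `f^j u_i` with `j < e(u_i)` form a basis of `V`, and `α`
sends `f^j u_i` to `f^j (α u_i)`; so `α` is determined by the tuple `(α u_i)`, which is again a
generator tuple with the same exponents. Conversely, two generator tuples with the same exponents
give two such bases indexed by the same set, and the linear equivalence matching them commutes
with `f` because `f` shifts `f^j u_i` to `f^(j+1) u_i` in both, vanishing at the same step.
-/

open LinearMap

variable {K : Type*} [Field K] {V : Type*} [AddCommGroup V] [Module K V]

open Module

lemma pow_apply_comm {f g : V →ₗ[K] V} (h : g ∘ₗ f = f ∘ₗ g) (n : ℕ) (x : V) :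
    (f ^ n) (g x) = g ((f ^ n) x) :=
  (LinearMap.congr_fun (Commute.pow_right h n).eq x).symm

lemma cyc_map {f g : V →ₗ[K] V} (h : g ∘ₗ f = f ∘ₗ g) (x : V) :
    cyc f (g x) = (cyc f x).map g := by
  rw [cyc, cyc, Submodule.map_span, ← Set.range_comp]
  congr 2
  funext i
  exact pow_apply_comm h i x

lemma DirectSum.IsInternal.map_linearEquiv {R M N ι : Type*} [Ring R] [AddCommGroup M]
    [Module R M] [AddCommGroup N] [Module R N] [DecidableEq ι] {A : ι → Submodule R M}
    (hA : DirectSum.IsInternal A) (e : M ≃ₗ[R] N) :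
    DirectSum.IsInternal fun i => (A i).map (e : M →ₗ[R] N) := by
  rw [DirectSum.isInternal_submodule_iff_iSupIndep_and_iSup_eq_top] at hA ⊢
  have hmap : (fun i => (A i).map (e : M →ₗ[R] N)) =
      fun i => Submodule.orderIsoMapComap e (A i) := rfl
  rw [hmap, ← OrderIso.map_iSup, hA.2]
  exact ⟨(iSupIndep_map_orderIso_iff _).mpr hA.1, OrderIso.map_top _⟩

namespace ExpEq

variable {f : V →ₗ[K] V} {x : V} {ℓ : ℕ}

lemma apply_of_succ (hx : ExpEq f x (ℓ + 1)) : ExpEq f (f x) ℓ := by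
  refine ⟨?_, fun j hj => ?_⟩
  · rw [← Module.End.mul_apply, ← pow_succ]
    exact hx.1
  · rw [← Module.End.mul_apply, ← pow_succ]
    exact hx.2 (j + 1) (by omega)

lemma map {g : V →ₗ[K] V} (hg : Function.Injective g) (hgf : g ∘ₗ f = f ∘ₗ g)
    (hx : ExpEq f x ℓ) : ExpEq f (g x) ℓ := by
  refine ⟨?_, fun j hj => ?_⟩
  · rw [pow_apply_comm hgf, hx.1, map_zero]
  · rw [pow_apply_comm hgf, ne_eq, map_eq_zero_iff g hg]
    exact hx.2 j hj

lemma linearIndependent (hx : ExpEq f x ℓ) :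
    LinearIndependent K fun j : Fin ℓ => (f ^ (j : ℕ)) x := by
  induction ℓ generalizing x with
  | zero => exact linearIndependent_empty_type
  | succ ℓ ih =>
    have hcons : (fun j : Fin (ℓ + 1) => (f ^ (j : ℕ)) x) =
        Fin.cons x fun j : Fin ℓ => (f ^ (j : ℕ)) (f x) := by
      funext j
      cases j using Fin.cases with
      | zero => simp
      | succ j => simp [pow_succ]
    have hspan : Submodule.span K (Set.range fun j : Fin ℓ => (f ^ (j : ℕ)) (f x)) ≤
        LinearMap.ker (f ^ ℓ) := by
      rw [Submodule.span_le]
      rintro _ ⟨j, rfl⟩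
      rw [SetLike.mem_coe, LinearMap.mem_ker, ← Module.End.mul_apply, ← pow_add,
        ← Module.End.mul_apply, ← pow_succ]
      exact Module.End.pow_map_zero_of_le (by omega) hx.1
    rw [hcons]
    exact (ih hx.apply_of_succ).finCons fun hmem => hx.2 ℓ (Nat.lt_succ_self ℓ) (hspan hmem)

lemma cyc_eq_span (hx : ExpEq f x ℓ) :
    cyc f x = Submodule.span K (Set.range fun j : Fin ℓ => (f ^ (j : ℕ)) x) := by
  refine le_antisymm (Submodule.span_le.mpr ?_) (Submodule.span_le.mpr ?_)
  · rintro _ ⟨i, rfl⟩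
    dsimp only
    by_cases hi : i < ℓ
    · exact Submodule.subset_span ⟨⟨i, hi⟩, rfl⟩
    · rw [SetLike.mem_coe, Module.End.pow_map_zero_of_le (not_lt.mp hi) hx.1]
      exact Submodule.zero_mem _
  · rintro _ ⟨j, rfl⟩
    exact Submodule.subset_span ⟨(j : ℕ), rfl⟩

noncomputable def cycBasis (hx : ExpEq f x ℓ) : Basis (Fin ℓ) K (cyc f x) :=
  (Basis.span hx.linearIndependent).map (LinearEquiv.ofEq _ _ hx.cyc_eq_span.symm)

lemma cycBasis_apply (hx : ExpEq f x ℓ) (j : Fin ℓ) :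
    (hx.cycBasis j : V) = (f ^ (j : ℕ)) x := by
  simp [cycBasis, Basis.span_apply]

end ExpEq

namespace IsGenTuple

variable {k : ℕ} {f : V →ₗ[K] V} {u : Fin k → V} {t : Fin k → ℕ}

noncomputable def basis (hu : IsGenTuple f u t) : Basis (Σ i, Fin (t i)) K V :=
  hu.2.collectedBasis fun i => (hu.1 i).cycBasis

lemma basis_apply (hu : IsGenTuple f u t) (p : Σ i, Fin (t i)) :
    hu.basis p = (f ^ (p.2 : ℕ)) (u p.1) := by
  rw [basis, DirectSum.IsInternal.collectedBasis_coe]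
  exact ExpEq.cycBasis_apply _ _

lemma map (hu : IsGenTuple f u t) {α : V ≃ₗ[K] V}
    (hα : (α : V →ₗ[K] V) ∘ₗ f = f ∘ₗ (α : V →ₗ[K] V)) :
    IsGenTuple f (fun i => α (u i)) t := by
  refine ⟨fun i => (hu.1 i).map α.injective hα, ?_⟩
  have hcyc : (fun i => cyc f (α (u i))) = fun i => (cyc f (u i)).map (α : V →ₗ[K] V) :=
    funext fun i => cyc_map hα (u i)
  rw [hcyc]
  exact hu.2.map_linearEquiv α

lemma linearMap_ext (hu : IsGenTuple f u t) {g h : V →ₗ[K] V} (hg : g ∘ₗ f = f ∘ₗ g)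
    (hh : h ∘ₗ f = f ∘ₗ h) (hgh : ∀ i, g (u i) = h (u i)) : g = h :=
  hu.basis.ext fun p => by
    rw [basis_apply, ← pow_apply_comm hg, ← pow_apply_comm hh, hgh]

lemma exists_linearEquiv (hu : IsGenTuple f u t) {v : Fin k → V} (hv : IsGenTuple f v t) :
    ∃ α : V ≃ₗ[K] V, (α : V →ₗ[K] V) ∘ₗ f = f ∘ₗ (α : V →ₗ[K] V) ∧ ∀ i, α (u i) = v i := by
  let α := hu.basis.equiv hv.basis (Equiv.refl _)
  have hα_pow : ∀ i (n : ℕ), α ((f ^ n) (u i)) = (f ^ n) (v i) := by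
    intro i n
    by_cases hn : n < t i
    · have := hu.basis.equiv_apply ⟨i, ⟨n, hn⟩⟩ hv.basis (Equiv.refl _)
      rwa [basis_apply, basis_apply] at this
    · rw [Module.End.pow_map_zero_of_le (not_lt.mp hn) (hu.1 i).1,
        Module.End.pow_map_zero_of_le (not_lt.mp hn) (hv.1 i).1, map_zero]
  refine ⟨α, hu.basis.ext fun p => ?_, fun i => by simpa using hα_pow i 0⟩
  rw [basis_apply, LinearMap.comp_apply, LinearMap.comp_apply, LinearEquiv.coe_coe,
    ← Module.End.mul_apply, ← pow_succ', hα_pow, hα_pow, pow_succ', Module.End.mul_apply]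

end IsGenTuple

theorem stmt2_general (f : V →ₗ[K] V)
    {k : ℕ} (u : Fin k → V) (t : Fin k → ℕ) (hu : IsGenTuple f u t) :
    Set.BijOn (fun (α : V ≃ₗ[K] V) => fun i => α (u i))
      {α : V ≃ₗ[K] V | (α : V →ₗ[K] V) ∘ₗ f = f ∘ₗ (α : V →ₗ[K] V)}
      {v : Fin k → V | IsGenTuple f v t} := by
  refine ⟨fun α hα => hu.map hα, fun α hα β hβ hαβ => ?_, fun v hv => ?_⟩
  · exact LinearEquiv.toLinearMap_injective (hu.linearMap_ext hα hβ (congrFun hαβ))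
  · obtain ⟨α, hα, hαv⟩ := hu.exists_linearEquiv hv
    exact ⟨α, hα, funext hαv⟩

theorem stmt2 [FiniteDimensional K V] (f : V →ₗ[K] V) (hf : IsNilpotent f)
    {k : ℕ} (u : Fin k → V) (t : Fin k → ℕ) (ht : Monotone t) (hu : IsGenTuple f u t) :
    Set.BijOn (fun (α : V ≃ₗ[K] V) => fun i => α (u i))
      {α : V ≃ₗ[K] V | (α : V →ₗ[K] V) ∘ₗ f = f ∘ₗ (α : V →ₗ[K] V)}
      {v : Fin k → V | IsGenTuple f v t} :=
  stmt2_general f u t hu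
end

section
/- Suppose V = ⟨u_1⟩ ⊕ ⋯ ⊕ ⟨u_n⟩ where each generator u_i has exponent a (all cyclic summands of equal length a). If x ∈ V is nonzero with height h(x) = 0 (i.e., x ∉ fV), then there is an index j such that replacing u_j by x still gives a direct sum decomposition: V = ⟨u_1⟩ ⊕ ⋯ ⊕ ⟨u_{j-1}⟩ ⊕ ⟨x⟩ ⊕ ⟨u_{j+1}⟩ ⊕ ⋯ ⊕ ⟨u_n⟩. -/
/-!
Write `x = ∑ pᵢ(f) uᵢ`. Since `x ∉ fV`, some `pⱼ` has a nonzero constant term, so `pⱼ(f)` is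
invertible on `⟨uⱼ⟩` and `uⱼ` lies in the span of `x` and the `uᵢ`, `i ≠ j`; hence the new family
of cyclic subspaces spans `V`. As `fᵃ x = 0`, `dim ⟨x⟩ ≤ a = dim ⟨uⱼ⟩`, so the dimensions of the new
summands add up to at most `dim V`, which forces the sum to be direct.
-/

open LinearMap

variable {K : Type*} [Field K] {V : Type*} [AddCommGroup V] [Module K V]

open Polynomial
open scoped DirectSum

section DirectSumFinrank

lemma finrank_directSum_submodule {ι : Type*} [Fintype ι] (A : ι → Submodule K V)
    [∀ i, FiniteDimensional K (A i)] :
    Module.finrank K (⨁ i, A i) = ∑ i, Module.finrank K (A i) := by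
  classical
  rw [(DirectSum.linearEquivFunOnFintype K ι fun i => A i).finrank_eq, Module.finrank_pi_fintype]

variable {ι : Type*} [Fintype ι] [DecidableEq ι] [FiniteDimensional K V]
  {A : ι → Submodule K V}

lemma DirectSum.IsInternal.finrank_eq_sum (h : DirectSum.IsInternal A) :
    Module.finrank K V = ∑ i, Module.finrank K (A i) := by
  rw [← finrank_directSum_submodule,
    (LinearEquiv.ofBijective (DirectSum.coeLinearMap A) h).finrank_eq]

lemma DirectSum.isInternal_of_iSup_eq_top_of_sum_finrank_le (htop : ⨆ i, A i = ⊤)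
    (hle : ∑ i, Module.finrank K (A i) ≤ Module.finrank K V) : DirectSum.IsInternal A := by
  have hsurj : Function.Surjective (DirectSum.coeLinearMap A) := by
    rw [← LinearMap.range_eq_top, DirectSum.range_coeLinearMap, htop]
  exact OrzechProperty.bijective_of_surjective_of_finrank_le _ hsurj
    (finrank_directSum_submodule A ▸ hle)

end DirectSumFinrank

section Cyclic

variable {f : V →ₗ[K] V} {y z : V} {p : K[X]}

lemma mem_cyc_iff : z ∈ cyc f y ↔ ∃ p : K[X], aeval f p y = z := by
  constructor
  · intro hz
    induction hz using Submodule.span_induction with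
    | mem _ h => obtain ⟨i, rfl⟩ := h; exact ⟨X ^ i, by rw [aeval_X_pow]⟩
    | zero => exact ⟨0, by simp⟩
    | add _ _ _ _ h₁ h₂ =>
      obtain ⟨p, rfl⟩ := h₁; obtain ⟨q, rfl⟩ := h₂
      exact ⟨p + q, by rw [map_add, LinearMap.add_apply]⟩
    | smul c _ _ h =>
      obtain ⟨p, rfl⟩ := h
      exact ⟨C c * p, by simp [Module.algebraMap_end_apply]⟩
  · rintro ⟨p, rfl⟩
    induction p using Polynomial.induction_on' with
    | add p q hp hq => rw [map_add, LinearMap.add_apply]; exact add_mem hp hq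
    | monomial n c =>
      rw [aeval_monomial, Module.End.mul_apply, Module.algebraMap_end_apply]
      exact Submodule.smul_mem _ _ (Submodule.subset_span ⟨n, rfl⟩)

lemma self_mem_cyc (f : V →ₗ[K] V) (y : V) : y ∈ cyc f y :=
  mem_cyc_iff.mpr ⟨1, by simp⟩

lemma cyc_le_comap (f : V →ₗ[K] V) (y : V) : cyc f y ≤ (cyc f y).comap f := by
  rintro _ h
  obtain ⟨p, rfl⟩ := mem_cyc_iff.mp h
  exact mem_cyc_iff.mpr ⟨X * p, by rw [map_mul, aeval_X, Module.End.mul_apply]⟩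

lemma cyc_le_of_mem {W : Submodule K V} (hW : W ≤ W.comap f) (hy : y ∈ W) : cyc f y ≤ W := by
  rintro _ h
  obtain ⟨p, rfl⟩ := mem_cyc_iff.mp h
  exact aeval_apply_smul_mem_of_le_comap hy p f hW

lemma pow_apply_aeval (f : V →ₗ[K] V) (m : ℕ) (p : K[X]) (y : V) :
    (f ^ m) (aeval f p y) = aeval f p ((f ^ m) y) := by
  rw [← Module.End.mul_apply, ← aeval_X_pow (R := K), ← map_mul, mul_comm, map_mul,
    aeval_X_pow, Module.End.mul_apply]

lemma aeval_mem_range_of_coeff_zero_eq_zero (hp : p.coeff 0 = 0) : aeval f p y ∈ range f := by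
  obtain ⟨q, rfl⟩ := X_dvd_iff.mpr hp
  exact ⟨aeval f q y, by rw [map_mul, aeval_X, Module.End.mul_apply]⟩

/-- `p` is invertible modulo `X ^ m`, which kills `y`. -/
lemma mem_cyc_aeval_of_coeff_zero_ne_zero {m : ℕ} (hy : (f ^ m) y = 0) (hp : p.coeff 0 ≠ 0) :
    y ∈ cyc f (aeval f p y) := by
  obtain ⟨r, s, hrs⟩ : IsCoprime p (X ^ m) :=
    ((irreducible_X.coprime_iff_not_dvd).mpr (mt X_dvd_iff.mp hp)).symm.pow_right
  refine mem_cyc_iff.mpr ⟨r, ?_⟩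
  simpa [Module.End.mul_apply, hy] using congrArg (fun q : K[X] => aeval f q y) hrs

lemma eq_zero_of_aeval_eq_zero {m : ℕ} (hy : (f ^ m) y = 0) (hp : p.coeff 0 ≠ 0)
    (h : aeval f p y = 0) : y = 0 := by
  obtain ⟨r, rfl⟩ := mem_cyc_iff.mp (h ▸ mem_cyc_aeval_of_coeff_zero_ne_zero hy hp)
  exact map_zero _

lemma X_pow_dvd_of_aeval_eq_zero {e : ℕ} (he : ExpEq f y e) (hp : aeval f p y = 0) :
    X ^ e ∣ p := by
  rcases eq_or_ne p 0 with rfl | hp0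
  · exact dvd_zero _
  obtain ⟨q, hpq, hq⟩ := exists_eq_pow_rootMultiplicity_mul_and_not_dvd p hp0 0
  set m := p.rootMultiplicity 0
  rw [map_zero, sub_zero] at hpq hq
  have hfm : (f ^ m) y = 0 := by
    refine eq_zero_of_aeval_eq_zero (f := f) (m := e) ?_ (mt X_dvd_iff.mpr hq) ?_
    · rw [← Module.End.mul_apply, ← pow_add, add_comm, pow_add, Module.End.mul_apply, he.1,
        map_zero]
    · rw [← pow_apply_aeval, ← Module.End.mul_apply, ← aeval_X_pow (R := K), ← map_mul, ← hpq,
        hp]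
  have hem : e ≤ m := by
    by_contra! hlt
    exact he.2 m hlt hfm
  rw [hpq]
  exact (pow_dvd_pow X hem).mul_right q

lemma cyc_eq_span_fin {e : ℕ} (h : (f ^ e) y = 0) :
    cyc f y = Submodule.span K (Set.range fun i : Fin e => (f ^ (i : ℕ)) y) := by
  refine le_antisymm (Submodule.span_le.mpr ?_) (Submodule.span_mono ?_)
  · rintro _ ⟨i, rfl⟩
    rcases lt_or_ge i e with hi | hi
    · exact Submodule.subset_span ⟨⟨i, hi⟩, rfl⟩
    · have hvanish : (f ^ i) y = 0 := by
        rw [← Nat.sub_add_cancel hi, pow_add, Module.End.mul_apply, h, map_zero]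
      simp only [SetLike.mem_coe, hvanish, Submodule.zero_mem]
  · rintro _ ⟨i, rfl⟩
    exact ⟨i, rfl⟩

lemma finrank_cyc_le {e : ℕ} (h : (f ^ e) y = 0) : Module.finrank K (cyc f y) ≤ e := by
  rw [cyc_eq_span_fin h]
  exact (finrank_range_le_card _).trans_eq (Fintype.card_fin e)

lemma linearIndependent_pow_apply {e : ℕ} (he : ExpEq f y e) :
    LinearIndependent K fun i : Fin e => (f ^ (i : ℕ)) y := by
  rw [Fintype.linearIndependent_iff]
  intro g hg
  set p : K[X] := ∑ i : Fin e, C (g i) * X ^ (i : ℕ)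
  have hp : aeval f p y = 0 := by
    simpa [p, map_sum, Module.End.mul_apply, Module.algebraMap_end_apply] using hg
  have hp0 : p = 0 :=
    eq_zero_of_dvd_of_degree_lt (X_pow_dvd_of_aeval_eq_zero he hp)
      (by simpa using degree_sum_fin_lt g)
  intro i
  simpa [p, finsetSum_coeff, coeff_C_mul_X_pow, Fin.val_inj] using congrArg (coeff · i) hp0

lemma finrank_cyc {e : ℕ} (he : ExpEq f y e) : Module.finrank K (cyc f y) = e := by
  rw [cyc_eq_span_fin he.1, finrank_span_eq_card (linearIndependent_pow_apply he),
    Fintype.card_fin]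

end Cyclic

section Exchange

variable {ι : Type*} [Fintype ι] {f : V →ₗ[K] V} {u : ι → V}

lemma exists_sum_aeval_eq (htop : ⨆ i, cyc f (u i) = ⊤) (x : V) :
    ∃ p : ι → K[X], ∑ i, aeval f (p i) (u i) = x := by
  have hx : x ∈ ⨆ i ∈ Finset.univ, cyc f (u i) := by simp [htop]
  obtain ⟨v, rfl⟩ := (Submodule.mem_iSup_finset_iff_exists_sum _ x).mp hx
  choose p hp using fun i => mem_cyc_iff.mp (v i).2
  exact ⟨p, by simp [hp]⟩

/-- `uⱼ` is recovered from `pⱼ(f) uⱼ = x - ∑_{i ≠ j} pᵢ(f) uᵢ`, as `pⱼ(f)` is invertible on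
`⟨uⱼ⟩`. -/
lemma iSup_cyc_update_sum_aeval_eq_top [DecidableEq ι] (htop : ⨆ i, cyc f (u i) = ⊤)
    (p : ι → K[X]) {j : ι} (hj : (p j).coeff 0 ≠ 0) {m : ℕ} (hm : (f ^ m) (u j) = 0) :
    ⨆ i, cyc f (Function.update u j (∑ i, aeval f (p i) (u i)) i) = ⊤ := by
  set x := ∑ i, aeval f (p i) (u i) with hx
  set W := ⨆ i, cyc f (Function.update u j x i)
  have hW : W ≤ W.comap f := iSup_le fun i =>
    (cyc_le_comap f _).trans
      (Submodule.comap_mono (le_iSup (fun i => cyc f (Function.update u j x i)) i))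
  have hmem : ∀ i, i ≠ j → u i ∈ W := fun i hi =>
    Submodule.mem_iSup_of_mem i (by rw [Function.update_of_ne hi]; exact self_mem_cyc f _)
  have hxW : x ∈ W :=
    Submodule.mem_iSup_of_mem j (by rw [Function.update_self]; exact self_mem_cyc f x)
  have hvj : aeval f (p j) (u j) ∈ W := by
    have hsplit : aeval f (p j) (u j) = x - ∑ i ∈ Finset.univ.erase j, aeval f (p i) (u i) := by
      rw [hx, ← Finset.add_sum_erase _ _ (Finset.mem_univ j), add_sub_cancel_right]
    rw [hsplit]
    exact sub_mem hxW (Submodule.sum_mem _ fun i hi =>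
      aeval_apply_smul_mem_of_le_comap (hmem i (Finset.ne_of_mem_erase hi)) (p i) f hW)
  have huj : u j ∈ W := cyc_le_of_mem hW hvj (mem_cyc_aeval_of_coeff_zero_ne_zero hm hj)
  refine eq_top_iff.mpr (htop ▸ iSup_le fun i => cyc_le_of_mem hW ?_)
  rcases eq_or_ne i j with rfl | hi
  exacts [huj, hmem i hi]

end Exchange

theorem stmt3_general [FiniteDimensional K V] (f : V →ₗ[K] V)
    {n : ℕ} (u : Fin n → V) (a : ℕ) (hexp : ∀ i, ExpEq f (u i) a)
    (hds : DirectSum.IsInternal fun i => cyc f (u i))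
    (x : V) (hh : x ∉ LinearMap.range f) :
    ∃ j : Fin n, DirectSum.IsInternal fun i => cyc f (Function.update u j x i) := by
  have htop := hds.submodule_iSup_eq_top
  obtain ⟨p, rfl⟩ := exists_sum_aeval_eq htop x
  obtain ⟨j, hj⟩ : ∃ j, (p j).coeff 0 ≠ 0 := by
    by_contra! h
    exact hh (Submodule.sum_mem _ fun i _ => aeval_mem_range_of_coeff_zero_eq_zero (h i))
  have hxa : (f ^ a) (∑ i, aeval f (p i) (u i)) = 0 := by
    simp [map_sum, pow_apply_aeval, (hexp _).1]
  refine ⟨j, DirectSum.isInternal_of_iSup_eq_top_of_sum_finrank_le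
    (iSup_cyc_update_sum_aeval_eq_top htop p hj (hexp j).1) ?_⟩
  rw [hds.finrank_eq_sum]
  refine Finset.sum_le_sum fun i _ => ?_
  rcases eq_or_ne i j with rfl | hij
  · rw [Function.update_self, finrank_cyc (hexp i)]
    exact finrank_cyc_le hxa
  · rw [Function.update_of_ne hij]

theorem stmt3 [FiniteDimensional K V] (f : V →ₗ[K] V) (hf : IsNilpotent f)
    {n : ℕ} (u : Fin n → V) (a : ℕ) (hexp : ∀ i, ExpEq f (u i) a)
    (hds : DirectSum.IsInternal fun i => cyc f (u i))
    (x : V) (hx0 : x ≠ 0) (hh : x ∉ LinearMap.range f) :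
    ∃ j : Fin n, DirectSum.IsInternal fun i => cyc f (Function.update u j x i) :=
  stmt3_general f u a hexp hds x hh
end

section
/- Suppose f is nilpotent on V with V[f] = f^{a−1}V and dim V[f] = k > 1 (i.e., all k > 1 Jordan blocks of f have equal size a). Then there exist automorphisms β and γ of V, both commuting with f, such that β + γ = id_V. -/
open LinearMap

variable {K : Type*} [Field K] {V : Type*} [AddCommGroup V] [Module K V]

/-! The hypothesis makes `V` free of rank `k` over `K[f] / (f ^ a)`: if the `f ^ (a - 1) uᵢ` form a
basis of `ker f`, the `f ^ j uᵢ` (`i < k`, `j < a`) form a basis of `V`. A `k × k` matrix then acts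
on `V` through the index `i` of this basis, and this is a ring homomorphism into the endomorphisms
commuting with `f`. So it suffices to find a matrix `M` with `M` and `1 - M` invertible: for
`k ≥ 2`, take multiplication by a root `r` of `X ^ k - X - 1`, since `r (r ^ (k - 1) - 1) = 1` and
`(1 + r + ⋯ + r ^ (k - 1)) (r - 1) = r`. -/

open Module

theorem isUnit_and_isUnit_one_sub_of_pow_succ_eq_add_one {R : Type*} [CommRing R] {r : R} {m : ℕ}
    (h : r ^ (m + 1) = r + 1) : IsUnit r ∧ IsUnit (1 - r) := by
  have hr : IsUnit r := .of_mul_eq_one (r ^ m - 1) (by rw [mul_sub, ← pow_succ', h]; ring)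
  have hgeom : (∑ i ∈ Finset.range (m + 1), r ^ i) * (r - 1) = r := by rw [geom_sum_mul, h]; ring
  refine ⟨hr, ?_⟩
  rw [← neg_sub, IsUnit.neg_iff]
  exact isUnit_of_mul_isUnit_right (hgeom ▸ hr)

open Polynomial in
theorem Matrix.exists_isUnit_and_isUnit_one_sub (K : Type*) [Field K] {k : ℕ} (hk : 1 < k) :
    ∃ M : Matrix (Fin k) (Fin k) K, IsUnit M ∧ IsUnit (1 - M) := by
  set p : K[X] := X ^ k - (X + 1)
  have hdeg : (X + 1 : K[X]).natDegree < (X ^ k : K[X]).natDegree := by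
    rw [natDegree_X_pow, ← C_1, natDegree_X_add_C]; exact hk
  have hp : p.Monic := (monic_X_pow k).sub_of_left (degree_lt_degree hdeg)
  have hpk : p.natDegree = k := by rw [natDegree_sub_eq_left_of_natDegree_lt hdeg, natDegree_X_pow]
  obtain ⟨hr, hr1⟩ := isUnit_and_isUnit_one_sub_of_pow_succ_eq_add_one (r := AdjoinRoot.root p)
    (m := k - 1) (by
      rw [Nat.sub_add_cancel hk.le, ← sub_eq_zero]
      simpa [p] using AdjoinRoot.eval₂_root p)
  let b := (AdjoinRoot.powerBasis' hp).basis.reindex (finCongr hpk)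
  exact ⟨Algebra.leftMulMatrix b (AdjoinRoot.root p), hr.map _,
    by simpa using hr1.map (Algebra.leftMulMatrix b)⟩

section

variable {W U : Type*} [AddCommGroup W] [Module K W] [AddCommGroup U] [Module K U]

theorem LinearMap.finrank_ker_comp_le [FiniteDimensional K V] [FiniteDimensional K W]
    (g : W →ₗ[K] U) (h : V →ₗ[K] W) :
    finrank K (ker (g ∘ₗ h)) ≤ finrank K (ker g) + finrank K (ker h) := by
  set r := h.domRestrict (ker (g ∘ₗ h))
  have hrange : range r ≤ ker g := by
    rintro _ ⟨⟨x, hx⟩, rfl⟩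
    exact hx
  have hker : (ker r).map (ker (g ∘ₗ h)).subtype ≤ ker h := by
    rintro _ ⟨⟨x, _⟩, hx, rfl⟩
    exact hx
  calc finrank K (ker (g ∘ₗ h)) = finrank K (range r) + finrank K (ker r) :=
        (finrank_range_add_finrank_ker r).symm
    _ ≤ finrank K (ker g) + finrank K (ker h) := by
        gcongr
        · exact Submodule.finrank_mono hrange
        · rw [← Submodule.finrank_map_subtype_eq]
          exact Submodule.finrank_mono hker

end

theorem Module.End.finrank_ker_pow_le [FiniteDimensional K V] (f : End K V) (j : ℕ) :
    finrank K (ker (f ^ j)) ≤ j * finrank K (ker f) := by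
  induction j with
  | zero => simp [End.one_eq_id]
  | succ j ih =>
    rw [pow_succ, End.mul_eq_comp, Nat.succ_mul]
    exact (finrank_ker_comp_le _ _).trans (Nat.add_le_add_right ih _)

theorem Module.End.pow_succ_eq_zero_of_range_pow_le_ker {f : End K V} {n : ℕ}
    (h : range (f ^ n) ≤ ker f) : f ^ (n + 1) = 0 := by
  ext x
  rw [pow_succ', End.mul_apply]
  exact h ⟨x, rfl⟩

theorem Module.End.linearIndependent_pow_apply {ι : Type*} [Fintype ι] {f : End K V} {n : ℕ}
    {u : ι → V} (hu : ∀ i, (f ^ (n + 1)) (u i) = 0)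
    (hli : LinearIndependent K fun i => (f ^ n) (u i)) :
    LinearIndependent K fun p : ι × Fin (n + 1) => (f ^ (p.2 : ℕ)) (u p.1) := by
  rw [Fintype.linearIndependent_iff]
  intro c hc
  suffices ∀ m : ℕ, ∀ i (j : Fin (n + 1)), (j : ℕ) = m → c (i, j) = 0 from
    fun p => this _ p.1 p.2 rfl
  intro m
  induction m using Nat.strong_induction_on with
  | _ m ih =>
  rintro i j rfl
  -- Terms of index below `j` vanish by induction, and applying `f ^ (n - j)` kills those above `j`.
  have hrow : ∀ l, ∑ j' : Fin (n + 1), c (l, j') • (f ^ (n - j + j')) (u l) =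
      c (l, j) • (f ^ n) (u l) := by
    intro l
    rw [Finset.sum_eq_single j]
    · rw [Nat.sub_add_cancel (Nat.lt_succ_iff.mp j.2)]
    · intro j' _ hne
      rcases lt_or_gt_of_ne (Fin.val_ne_of_ne hne) with h | h
      · rw [ih _ h l j' rfl, zero_smul]
      · rw [End.pow_map_zero_of_le (by omega) (hu l), smul_zero]
    · simp
  have hshift := congrArg (f ^ (n - j)) hc
  simp only [map_sum, map_smul, map_zero, ← End.mul_apply, ← pow_add, Fintype.sum_prod_type,
    hrow] at hshift
  exact Fintype.linearIndependent_iff.mp hli _ hshift i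

theorem Module.End.exists_basis_pow_apply_of_ker_eq_range [FiniteDimensional K V] {f : End K V}
    {n : ℕ} (hker : ker f = range (f ^ n)) :
    ∃ (u : Fin (finrank K (ker f)) → V) (B : Basis (Fin (finrank K (ker f)) × Fin (n + 1)) K V),
      ∀ i j, B (i, j) = (f ^ (j : ℕ)) (u i) := by
  let w := finBasis K (ker f)
  choose u hu using fun i => (hker ▸ (w i).2 : (w i : V) ∈ range (f ^ n))
  have hfn : f ^ (n + 1) = 0 := pow_succ_eq_zero_of_range_pow_le_ker hker.ge
  have hli := linearIndependent_pow_apply (u := u) (fun i => by rw [hfn]; rfl)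
    (by simp only [hu]; exact w.linearIndependent.map' _ (ker f).ker_subtype)
  have hcard : Fintype.card (Fin (finrank K (ker f)) × Fin (n + 1)) = finrank K V := by
    refine le_antisymm hli.fintype_card_le_finrank ?_
    have hdim := finrank_ker_pow_le f (n + 1)
    rw [hfn, ker_zero, finrank_top] at hdim
    simpa [mul_comm] using hdim
  exact ⟨u, basisOfLinearIndependentOfCardEqFinrank' _ hli hcard, fun _ _ => by simp⟩

section

variable {ι : Type*} [Fintype ι] [DecidableEq ι] {m : ℕ}

noncomputable def Module.Basis.blockwiseEnd (B : Basis (ι × Fin m) K V) :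
    Matrix ι ι K →+* End K V :=
  (Matrix.toLinAlgEquiv B).toRingHom.comp
    ((Matrix.blockDiagonalRingHom ι (Fin m) K).comp (Pi.constRingHom (Fin m) (Matrix ι ι K)))

theorem Module.Basis.blockwiseEnd_apply_self (B : Basis (ι × Fin m) K V) (M : Matrix ι ι K)
    (i : ι) (j : Fin m) : B.blockwiseEnd M (B (i, j)) = ∑ l, M l i • B (l, j) := by
  simp [blockwiseEnd, Matrix.toLinAlgEquiv_self, Fintype.sum_prod_type,
    Matrix.blockDiagonal_apply]

theorem Module.Basis.commute_blockwiseEnd (B : Basis (ι × Fin m) K V) {f : End K V} {u : ι → V}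
    (hB : ∀ i j, B (i, j) = (f ^ (j : ℕ)) (u i)) (hu : ∀ i, (f ^ m) (u i) = 0)
    (M : Matrix ι ι K) : Commute (B.blockwiseEnd M) f := by
  have hpow : ∀ i (e : ℕ), B.blockwiseEnd M ((f ^ e) (u i)) = ∑ l, M l i • (f ^ e) (u l) := by
    intro i e
    rcases lt_or_ge e m with he | he
    · simpa only [hB] using B.blockwiseEnd_apply_self M i ⟨e, he⟩
    · simp [End.pow_map_zero_of_le he (hu _)]
  refine B.ext fun ⟨i, j⟩ => ?_
  rw [End.mul_apply, End.mul_apply, hB, ← End.mul_apply f, ← pow_succ', hpow, hpow, map_sum]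
  simp only [map_smul, ← End.mul_apply f, ← pow_succ']

end

theorem Module.End.exists_linearEquiv_commute_add_eq_id {f β : End K V} (hc : Commute β f)
    (hβ : IsUnit β) (hγ : IsUnit (1 - β)) :
    ∃ β γ : V ≃ₗ[K] V,
      (β : V →ₗ[K] V) ∘ₗ f = f ∘ₗ (β : V →ₗ[K] V) ∧
      (γ : V →ₗ[K] V) ∘ₗ f = f ∘ₗ (γ : V →ₗ[K] V) ∧
      (β : V →ₗ[K] V) + (γ : V →ₗ[K] V) = LinearMap.id := by
  refine ⟨GeneralLinearGroup.generalLinearEquiv K V hβ.unit,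
    GeneralLinearGroup.generalLinearEquiv K V hγ.unit, ?_, ?_, ?_⟩ <;>
    simp only [GeneralLinearGroup.generalLinearEquiv_to_linearMap, IsUnit.unit_spec]
  · exact hc.eq
  · exact ((Commute.one_left f).sub_left hc).eq
  · exact add_sub_cancel β 1

theorem stmt9_general [FiniteDimensional K V] (f : V →ₗ[K] V)
    (a k : ℕ) (hker : LinearMap.ker f = LinearMap.range (f ^ (a - 1)))
    (hk : Module.finrank K ↥(LinearMap.ker f) = k) (hk1 : 1 < k) :
    ∃ β γ : V ≃ₗ[K] V,
      (β : V →ₗ[K] V) ∘ₗ f = f ∘ₗ (β : V →ₗ[K] V) ∧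
      (γ : V →ₗ[K] V) ∘ₗ f = f ∘ₗ (γ : V →ₗ[K] V) ∧
      (β : V →ₗ[K] V) + (γ : V →ₗ[K] V) = LinearMap.id := by
  subst hk
  obtain ⟨M, hM, hM1⟩ := Matrix.exists_isUnit_and_isUnit_one_sub K hk1
  obtain ⟨u, B, hB⟩ := End.exists_basis_pow_apply_of_ker_eq_range hker
  have hfa : f ^ (a - 1 + 1) = 0 := End.pow_succ_eq_zero_of_range_pow_le_ker hker.ge
  refine End.exists_linearEquiv_commute_add_eq_id
    (B.commute_blockwiseEnd hB (fun i => by rw [hfa]; rfl) M) (hM.map _) ?_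
  simpa using hM1.map B.blockwiseEnd

theorem stmt9 [FiniteDimensional K V] (f : V →ₗ[K] V) (hf : IsNilpotent f)
    (a k : ℕ) (ha : 1 ≤ a) (hker : LinearMap.ker f = LinearMap.range (f ^ (a - 1)))
    (hk : Module.finrank K ↥(LinearMap.ker f) = k) (hk1 : 1 < k) :
    ∃ β γ : V ≃ₗ[K] V,
      (β : V →ₗ[K] V) ∘ₗ f = f ∘ₗ (β : V →ₗ[K] V) ∧
      (γ : V →ₗ[K] V) ∘ₗ f = f ∘ₗ (γ : V →ₗ[K] V) ∧
      (β : V →ₗ[K] V) + (γ : V →ₗ[K] V) = LinearMap.id :=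
  stmt9_general f a k hker hk hk1
end

section
/- Let f be nilpotent on V with exponent decomposition V = ⟨U_{a_1}⟩ ⊕ ⋯ ⊕ ⟨U_{a_m}⟩, and let X be a characteristic subspace. If x ∈ X decomposes as x = x_1 + ⋯ + x_m with x_i ∈ ⟨U_{a_i}⟩, and if the number of generators |U_{a_s}| > 1 for some s, then x_s ∈ X. -/
/-!
If `u i` and `u j` (`i ≠ j`) have the same exponent, the map `p(f) u i ↦ p(f) u j`, extended by
zero on the other cyclic summands, is a square-zero endomorphism commuting with `f`; hence `1 + φ`
is an automorphism commuting with `f`, and every characteristic subspace is stable under `φ`.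
Shifting from `i` to `j` and back is the projection onto `⟨u i⟩`, so a characteristic subspace is
stable under the projection onto any summand whose exponent occurs at least twice, and `x_s` is the
sum of such projections of `x`.
-/

open LinearMap

variable {K : Type*} [Field K] {V : Type*} [AddCommGroup V] [Module K V]

open Polynomial DirectSum

theorem Chinv.apply_mem_of_isNilpotent {f : V →ₗ[K] V} {X : Submodule K V} (hX : Chinv f X)
    {g : V →ₗ[K] V} (hgf : g ∘ₗ f = f ∘ₗ g) (hg : IsNilpotent g) {v : V} (hv : v ∈ X) :
    g v ∈ X := by
  let α : V ≃ₗ[K] V :=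
    LinearEquiv.ofBijective (1 + g) ((Module.End.isUnit_iff _).mp hg.isUnit_one_add)
  have hαf : (α : V →ₗ[K] V) ∘ₗ f = f ∘ₗ (α : V →ₗ[K] V) := by
    change (1 + g) * f = f * (1 + g)
    rw [add_mul, mul_add, one_mul, mul_one]
    exact congrArg (f + ·) hgf
  have hαv : α v ∈ X := hX.2 α hαf ▸ Submodule.mem_map_of_mem hv
  have hgv : g v = α v - v := by
    change g v = (1 + g) v - v
    simp
  exact hgv ▸ X.sub_mem hαv hv

section CyclicSubspace

variable (f : V →ₗ[K] V)

theorem aeval_X_mul_apply (p : K[X]) (v : V) : aeval f (X * p) v = f (aeval f p v) := by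
  rw [map_mul, Module.End.mul_apply, aeval_X]

theorem aeval_apply_map_self (p : K[X]) (v : V) : aeval f p (f v) = f (aeval f p v) := by
  rw [← aeval_X_mul_apply, (commute_X p).eq, map_mul, Module.End.mul_apply, aeval_X]

noncomputable def aevalAt (w : V) : K[X] →ₗ[K] V :=
  LinearMap.applyₗ w ∘ₗ (aeval f).toLinearMap

@[simp]
theorem aevalAt_apply (w : V) (p : K[X]) : aevalAt f w p = aeval f p w := rfl

theorem cyc_eq_range_aevalAt (w : V) : cyc f w = LinearMap.range (aevalAt f w) := by
  apply le_antisymm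
  · rw [cyc, Submodule.span_le]
    rintro _ ⟨n, rfl⟩
    exact ⟨X ^ n, by simp⟩
  · rintro _ ⟨p, rfl⟩
    rw [aevalAt_apply, aeval_eq_sum_range, LinearMap.sum_apply]
    exact Submodule.sum_mem _ fun n _ => Submodule.smul_mem _ _ (Submodule.subset_span ⟨n, rfl⟩)

theorem aeval_apply_mem_cyc (w : V) (p : K[X]) : aeval f p w ∈ cyc f w := by
  rw [cyc_eq_range_aevalAt]
  exact ⟨p, rfl⟩

theorem exists_aeval_of_mem_cyc {w v : V} (hv : v ∈ cyc f w) : ∃ p : K[X], aeval f p w = v := by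
  rwa [cyc_eq_range_aevalAt] at hv

theorem apply_mem_cyc {w v : V} (hv : v ∈ cyc f w) : f v ∈ cyc f w := by
  obtain ⟨p, rfl⟩ := exists_aeval_of_mem_cyc f hv
  rw [← aeval_X_mul_apply]
  exact aeval_apply_mem_cyc f w (X * p)

/-- The map `p(f) w ↦ p(f) w'`, well defined when every polynomial killing `w` kills `w'`. -/
noncomputable def cycTransfer {w w' : V}
    (h : LinearMap.ker (aevalAt f w) ≤ LinearMap.ker (aevalAt f w')) : cyc f w →ₗ[K] V :=
  (LinearMap.ker (aevalAt f w)).liftQ (aevalAt f w') h ∘ₗ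
    (aevalAt f w).quotKerEquivRange.symm.toLinearMap ∘ₗ
      (LinearEquiv.ofEq _ _ (cyc_eq_range_aevalAt f w)).toLinearMap

end CyclicSubspace

section Exponent

variable {f : V →ₗ[K] V}

theorem aeval_apply_eq_zero_of_X_pow_dvd {w : V} {s : ℕ} (hw : (f ^ s) w = 0) {p : K[X]}
    (hp : X ^ s ∣ p) : aeval f p w = 0 := by
  obtain ⟨q, rfl⟩ := hp
  rw [mul_comm, map_mul, Module.End.mul_apply, aeval_X_pow, hw, map_zero]

theorem ExpEq.apply {w : V} {s : ℕ} (hw : ExpEq f w (s + 1)) : ExpEq f (f w) s := by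
  refine ⟨by rw [← Module.End.mul_apply, ← pow_succ]; exact hw.1, fun j hj => ?_⟩
  rw [← Module.End.mul_apply, ← pow_succ]
  exact hw.2 (j + 1) (by omega)

theorem X_pow_dvd_of_aeval_apply_eq_zero {w : V} {s : ℕ} (hw : ExpEq f w s) {p : K[X]}
    (hp : aeval f p w = 0) : X ^ s ∣ p := by
  induction s generalizing w with
  | zero => simp
  | succ s ih =>
    obtain ⟨q, rfl⟩ := ih hw.apply (by rw [aeval_apply_map_self, hp, map_zero])
    -- modulo `X ^ (s + 1)`, which kills `w`, `X ^ s * q` is `q(0) X ^ s`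
    have hsplit : X ^ s * q = X ^ (s + 1) * q.divX + C (q.coeff 0) * X ^ s := by
      conv_lhs => rw [← X_mul_divX_add q]
      ring
    rw [hsplit, map_add, LinearMap.add_apply,
      aeval_apply_eq_zero_of_X_pow_dvd hw.1 (dvd_mul_right _ _), zero_add] at hp
    have hq : q.coeff 0 = 0 := by
      simpa [Module.End.mul_apply, hw.2 s (by omega)] using hp
    rw [pow_succ]
    exact mul_dvd_mul_left _ (X_dvd_iff.mpr hq)

theorem ker_aevalAt_le_of_expEq {w w' : V} {s : ℕ} (hw : ExpEq f w s) (hw' : (f ^ s) w' = 0) :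
    LinearMap.ker (aevalAt f w) ≤ LinearMap.ker (aevalAt f w') :=
  fun _ hp => aeval_apply_eq_zero_of_X_pow_dvd hw' (X_pow_dvd_of_aeval_apply_eq_zero hw hp)

end Exponent

section cycTransfer

variable {f : V →ₗ[K] V} {w w' : V}
  (h : LinearMap.ker (aevalAt f w) ≤ LinearMap.ker (aevalAt f w'))

theorem cycTransfer_aeval (p : K[X]) (hp : aeval f p w ∈ cyc f w) :
    cycTransfer f h ⟨aeval f p w, hp⟩ = aeval f p w' := by
  have hsymm : (aevalAt f w).quotKerEquivRange.symm ⟨aeval f p w, p, rfl⟩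
      = Submodule.Quotient.mk p := by
    rw [LinearEquiv.symm_apply_eq]
    rfl
  change (LinearMap.ker (aevalAt f w)).liftQ (aevalAt f w') h
    ((aevalAt f w).quotKerEquivRange.symm ⟨aeval f p w, p, rfl⟩) = _
  rw [hsymm]
  rfl

theorem cycTransfer_mem (v : cyc f w) : cycTransfer f h v ∈ cyc f w' := by
  obtain ⟨_, hv⟩ := v
  obtain ⟨p, rfl⟩ := exists_aeval_of_mem_cyc f hv
  rw [cycTransfer_aeval]
  exact aeval_apply_mem_cyc f w' p

theorem cycTransfer_apply_map {v : V} (hv : v ∈ cyc f w) :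
    cycTransfer f h ⟨f v, apply_mem_cyc f hv⟩ = f (cycTransfer f h ⟨v, hv⟩) := by
  obtain ⟨p, rfl⟩ := exists_aeval_of_mem_cyc f hv
  simp only [← aeval_X_mul_apply, cycTransfer_aeval]

end cycTransfer
section Decomposition

variable {ι : Type*} [DecidableEq ι] (N : ι → Submodule K V) [Decomposition N]

noncomputable def decomposeComponent (i : ι) : V →ₗ[K] N i :=
  component K ι (fun i => N i) i ∘ₗ (decomposeLinearEquiv N).toLinearMap

@[simp]
theorem decomposeComponent_apply (i : ι) (v : V) :
    decomposeComponent N i v = decompose N v i := rfl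

theorem coe_decompose_apply_of_mapsTo {g : V →ₗ[K] V} (hg : ∀ i, ∀ v ∈ N i, g v ∈ N i)
    (v : V) (i : ι) : (decompose N (g v) i : V) = g (decompose N v i) := by
  induction v using Decomposition.inductionOn N with
  | zero => simp
  | @homogeneous l m =>
    by_cases hl : l = i
    · subst hl
      rw [decompose_of_mem_same N (hg l m m.2), decompose_of_mem_same N m.2]
    · rw [decompose_of_mem_ne N (hg l m m.2) hl, decompose_of_mem_ne N m.2 hl, map_zero]
  | add v v' hv hv' => simp [decompose_add, hv, hv']

theorem decompose_apply_eq_zero_of_mem_biSup {S : Set ι} {v : V} (hv : v ∈ ⨆ i ∈ S, N i)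
    {l : ι} (hl : l ∉ S) : decompose N v l = 0 := by
  have hle : ⨆ i ∈ S, N i ≤ LinearMap.ker (decomposeComponent N l) :=
    iSup₂_le fun i hi w hw => Subtype.ext (decompose_of_mem_ne N hw (ne_of_mem_of_not_mem hi hl))
  exact hle hv

theorem sum_coe_decompose [Fintype ι] (v : V) : ∑ i, (decompose N v i : V) = v := by
  conv_rhs => rw [← (decompose N).symm_apply_apply v, ← DirectSum.sum_univ_of (decompose N v)]
  simp [decompose_symm_sum]

theorem mem_of_forall_decompose_mem [Fintype ι] {S : Set ι} {v : V} (hv : v ∈ ⨆ i ∈ S, N i)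
    {X : Submodule K V} (hX : ∀ l ∈ S, (decompose N v l : V) ∈ X) : v ∈ X := by
  rw [← sum_coe_decompose N v]
  refine X.sum_mem fun l _ => ?_
  by_cases hl : l ∈ S
  · exact hX l hl
  · simp [decompose_apply_eq_zero_of_mem_biSup N hv hl]

end Decomposition

section cycShift

variable (f : V →ₗ[K] V) {ι : Type*} [DecidableEq ι] {w : ι → V}
  [Decomposition fun l => cyc f (w l)]

noncomputable def cycShift (i j : ι)
    (h : LinearMap.ker (aevalAt f (w i)) ≤ LinearMap.ker (aevalAt f (w j))) : V →ₗ[K] V :=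
  cycTransfer f h ∘ₗ decomposeComponent (fun l => cyc f (w l)) i

variable {f} {i j : ι} (h : LinearMap.ker (aevalAt f (w i)) ≤ LinearMap.ker (aevalAt f (w j)))

theorem cycShift_aeval (p : K[X]) : cycShift f i j h (aeval f p (w i)) = aeval f p (w j) := by
  have hp := aeval_apply_mem_cyc f (w i) p
  have hdec : decompose (fun l => cyc f (w l)) (aeval f p (w i)) i = ⟨aeval f p (w i), hp⟩ :=
    Subtype.ext (decompose_of_mem_same _ hp)
  simp only [cycShift, LinearMap.comp_apply, decomposeComponent_apply, hdec, cycTransfer_aeval]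

theorem cycShift_apply_of_mem_ne {m : ι} (hm : m ≠ i) {v : V} (hv : v ∈ cyc f (w m)) :
    cycShift f i j h v = 0 := by
  have hdec : decompose (fun l => cyc f (w l)) v i = 0 :=
    Subtype.ext (decompose_of_mem_ne _ hv hm)
  simp only [cycShift, LinearMap.comp_apply, decomposeComponent_apply, hdec, map_zero]

theorem cycShift_mem (v : V) : cycShift f i j h v ∈ cyc f (w j) :=
  cycTransfer_mem h _

theorem cycShift_comm : cycShift f i j h ∘ₗ f = f ∘ₗ cycShift f i j h := by
  ext v
  have hdec : decompose (fun l => cyc f (w l)) (f v) i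
      = ⟨f (decompose (fun l => cyc f (w l)) v i), apply_mem_cyc f (Subtype.property _)⟩ :=
    Subtype.ext (coe_decompose_apply_of_mapsTo _ (fun l _ => apply_mem_cyc f) v i)
  simp only [cycShift, LinearMap.comp_apply, decomposeComponent_apply, hdec]
  exact cycTransfer_apply_map h _

theorem isNilpotent_cycShift (hij : i ≠ j) : IsNilpotent (cycShift f i j h) :=
  ⟨2, LinearMap.ext fun v => by
    rw [pow_two, Module.End.mul_apply,
      cycShift_apply_of_mem_ne h hij.symm (cycShift_mem h v), LinearMap.zero_apply]⟩

theorem cycShift_cycShift (h' : LinearMap.ker (aevalAt f (w j)) ≤ LinearMap.ker (aevalAt f (w i)))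
    (v : V) : cycShift f j i h' (cycShift f i j h v) = decompose (fun l => cyc f (w l)) v i := by
  obtain ⟨p, hp⟩ := exists_aeval_of_mem_cyc f (decompose (fun l => cyc f (w l)) v i).2
  have hdec : decompose (fun l => cyc f (w l)) v i
      = ⟨aeval f p (w i), aeval_apply_mem_cyc f (w i) p⟩ :=
    Subtype.ext hp.symm
  have hv : cycShift f i j h v = aeval f p (w j) := by
    simp only [cycShift, LinearMap.comp_apply, decomposeComponent_apply, hdec, cycTransfer_aeval]
  rw [hv, cycShift_aeval, hp]

end cycShift

theorem Chinv.coe_decompose_mem {f : V →ₗ[K] V} {X : Submodule K V} (hX : Chinv f X)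
    {ι : Type*} [DecidableEq ι] {w : ι → V} [Decomposition fun l => cyc f (w l)] {i j : ι} (hij : i ≠ j) {s : ℕ}
    (hi : ExpEq f (w i) s) (hj : ExpEq f (w j) s) {x : V} (hx : x ∈ X) :
    (decompose (fun l => cyc f (w l)) x i : V) ∈ X := by
  rw [← cycShift_cycShift (ker_aevalAt_le_of_expEq hi hj.1) (ker_aevalAt_le_of_expEq hj hi.1)]
  refine hX.apply_mem_of_isNilpotent (cycShift_comm _) (isNilpotent_cycShift _ hij.symm) ?_
  exact hX.apply_mem_of_isNilpotent (cycShift_comm _) (isNilpotent_cycShift _ hij) hx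

theorem stmt10_general (f : V →ₗ[K] V)
    {k : ℕ} (u : Fin k → V) (t : Fin k → ℕ) (hu : IsGenTuple f u t)
    (X : Submodule K V) (hX : Chinv f X)
    (xs : ℕ → V) (hxs : ∀ a, xs a ∈ subU f u t a)
    (hsum : (∑ a ∈ Finset.image t Finset.univ, xs a) ∈ X)
    (s : ℕ) (i j : Fin k) (hij : i ≠ j) (hti : t i = s) (htj : t j = s) :
    xs s ∈ X := by
  let := hu.2.chooseDecomposition
  refine mem_of_forall_decompose_mem _ (hxs s) fun l (hl : t l = s) => ?_
  have hdec : decompose (fun l => cyc f (u l)) (∑ a ∈ Finset.image t Finset.univ, xs a) l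
      = decompose (fun l => cyc f (u l)) (xs s) l := by
    rw [decompose_sum, DFinsupp.finsetSum_apply]
    refine Finset.sum_eq_single_of_mem s (hti ▸ Finset.mem_image_of_mem t (Finset.mem_univ i))
      fun a _ has => decompose_apply_eq_zero_of_mem_biSup _ (hxs a) fun hla => has (hla ▸ hl)
  obtain ⟨m, hml, htm⟩ : ∃ m, m ≠ l ∧ t m = s := by
    by_cases hli : l = i
    · exact ⟨j, hli ▸ hij.symm, htj⟩
    · exact ⟨i, Ne.symm hli, hti⟩
  rw [← hdec]
  exact hX.coe_decompose_mem hml.symm (hl ▸ hu.1 l) (htm ▸ hu.1 m) hsum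

theorem stmt10 [FiniteDimensional K V] (f : V →ₗ[K] V) (hf : IsNilpotent f)
    {k : ℕ} (u : Fin k → V) (t : Fin k → ℕ) (ht : Monotone t) (hu : IsGenTuple f u t)
    (X : Submodule K V) (hX : Chinv f X)
    (xs : ℕ → V) (hxs : ∀ a, xs a ∈ subU f u t a)
    (hsum : (∑ a ∈ Finset.image t Finset.univ, xs a) ∈ X)
    (s : ℕ) (i j : Fin k) (hij : i ≠ j) (hti : t i = s) (htj : t j = s) :
    xs s ∈ X :=
  stmt10_general f u t hu X hX xs hxs hsum s i j hij hti htj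
end
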